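/- arXiv:2107.05995 — 6 statements merged into one kernel-verified Lean document; each statement's English description precedes it below -/
import Mathlib

section
/- Let m = 66^144 and let G be the graph whose vertex set consists of two adjacent vertices u, v (the central pair) together with m pairs of adjacent vertices x_i, y_i (the outer pairs), where each x_i and each y_i is adjacent to both u and v, and there are no other edges. Then with 12 colors the players have a winning guessing strategy on G, i.e. HG(G) ≥ 12. -/
/-!
Colour the centre `(u, v)` by a cell `c ∈ Q × Q`, where `Q = Fin 12 ≃ Fin 6 × Bool`. Outer pair `i`
carries a map `ψᵢ : Q × Q → Fin 6`, and `xᵢ`, `yᵢ` guess as if their hat sum were `(ψᵢ c, false)`,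
resp. `(ψᵢ c, true)`; so pair `i` wins exactly when the `Fin 6`-class of its sum is `ψᵢ c`. As
`66 ^ 144 ≥ 6 ^ 144`, every map `Q × Q → Fin 6` is some `ψᵢ`, so whatever the outer hats, fewer than
6 cells `c` make every outer pair lose: a `ψᵢ` listing 6 such cells would win on one of them. Both
centre vertices see all outer hats, hence know these surviving cells, and any 5 cells of `Q × Q`
are covered by `{(a, b) | a = g b} ∪ {(a, b) | b = f a}` for suitable `g`, `f`.
-/

/-- A winning hat-guessing strategy with `q` colors on the graph `G`: each vertex `v` has a
guessing function that depends only on the hat colors of its neighbors, and for every hat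
assignment some vertex guesses its own hat color correctly. -/
def SimpleGraph.HatWinning {V : Type*} (G : SimpleGraph V) (q : ℕ) : Prop :=
  ∃ g : V → (V → Fin q) → Fin q,
    (∀ (v : V) (h h' : V → Fin q), (∀ u, G.Adj v u → h u = h' u) → g v h = g v h') ∧
    ∀ h : V → Fin q, ∃ v, g v h = h v

/-- The hat guessing number of `G`: the largest number of colors admitting a winning strategy. -/
noncomputable def SimpleGraph.hatGuessingNumber {V : Type*} (G : SimpleGraph V) : ℕ :=
  sSup {q | G.HatWinning q}

/-- The graph consisting of a central adjacent pair `u, v` together with `m` adjacent pairs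
`xᵢ, yᵢ`, where each `xᵢ` and each `yᵢ` is adjacent to both `u` and `v`, and no other edges.
The central pair is `Sum.inl false, Sum.inl true`; the `i`-th outer pair is
`Sum.inr (i, false), Sum.inr (i, true)`. -/
def pairGraph (m : ℕ) : SimpleGraph (Bool ⊕ (Fin m × Bool)) where
  Adj a b :=
    match a, b with
    | .inl x, .inl y => x ≠ y
    | .inl _, .inr _ => True
    | .inr _, .inl _ => True
    | .inr (i, s), .inr (j, t) => i = j ∧ s ≠ t
  symm := by constructor; rintro (x | ⟨i, s⟩) (y | ⟨j, t⟩) h <;> simp_all <;> tauto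
  loopless := by constructor; rintro (x | ⟨i, s⟩) h <;> simp_all

open Finset Function

theorem Finset.exists_subset_pair_of_card_le_two {α : Type*} [DecidableEq α] [Nonempty α]
    {s : Finset α} (hs : #s ≤ 2) : ∃ a b : α, s ⊆ {a, b} := by
  interval_cases h : #s
  · obtain rfl := card_eq_zero.1 h
    exact ⟨Classical.arbitrary α, Classical.arbitrary α, empty_subset _⟩
  · obtain ⟨a, rfl⟩ := card_eq_one.1 h
    exact ⟨a, a, by simp⟩
  · obtain ⟨a, b, -, rfl⟩ := card_eq_two.1 h
    exact ⟨a, b, subset_rfl⟩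

theorem Finset.two_mul_card_image_le {α β : Type*} [DecidableEq β] {s : Finset α} (f : α → β)
    (hs : ∀ x ∈ s, ∃ y ∈ s, y ≠ x ∧ f y = f x) : 2 * #(s.image f) ≤ #s := by
  rw [card_eq_sum_card_image f s, mul_comm, ← smul_eq_mul]
  refine card_nsmul_le_sum _ _ _ fun b hb => ?_
  obtain ⟨x, hx, rfl⟩ := mem_image.1 hb
  obtain ⟨y, hy, hyx, hfy⟩ := hs x hx
  exact one_lt_card.2 ⟨y, by simp [hy, hfy], x, by simp [hx], hyx⟩

/-- The two players of an isolated edge, guessing `g` and `f` of each other's colour, win on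
every colouring in `C`. -/
def PairCoverable {α β : Type*} (C : Finset (α × β)) : Prop :=
  ∃ (g : β → α) (f : α → β), ∀ p ∈ C, p.1 = g p.2 ∨ p.2 = f p.1

section PairCoverable

variable {α β : Type*} [DecidableEq α] [DecidableEq β] {C : Finset (α × β)}

theorem pairCoverable_of_forall_mem_pair {a₁ a₂ : α} {b₁ b₂ : β}
    (hC : ∀ p ∈ C, (p.1 = a₁ ∨ p.1 = a₂) ∧ (p.2 = b₁ ∨ p.2 = b₂)) : PairCoverable C := by
  refine ⟨fun b => if b = b₁ then a₁ else a₂, fun a => if a = a₁ then b₂ else b₁, ?_⟩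
  intro p hp
  obtain ⟨ha | ha, hb | hb⟩ := hC p hp <;> simp only [ha, hb] <;> split_ifs <;> simp_all

theorem PairCoverable.of_erase_of_forall_snd_ne {p : α × β} (hC : PairCoverable (C.erase p))
    (hp : ∀ q ∈ C, q ≠ p → q.2 ≠ p.2) : PairCoverable C := by
  obtain ⟨g, f, hgf⟩ := hC
  refine ⟨update g p.2 p.1, f, fun q hq => ?_⟩
  by_cases hqp : q = p
  · simp [hqp]
  · rw [update_of_ne (hp q hq hqp)]
    exact hgf q (mem_erase.2 ⟨hqp, hq⟩)

theorem PairCoverable.of_erase_of_forall_fst_ne {p : α × β} (hC : PairCoverable (C.erase p))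
    (hp : ∀ q ∈ C, q ≠ p → q.1 ≠ p.1) : PairCoverable C := by
  obtain ⟨g, f, hgf⟩ := hC
  refine ⟨g, update f p.1 p.2, fun q hq => ?_⟩
  by_cases hqp : q = p
  · simp [hqp]
  · rw [update_of_ne (hp q hq hqp)]
    exact hgf q (mem_erase.2 ⟨hqp, hq⟩)

theorem pairCoverable_of_card_le_five [Nonempty α] [Nonempty β] (hC : #C ≤ 5) :
    PairCoverable C := by
  induction C using Finset.strongInduction with
  | H C ih =>
  have ih_erase {p} (hp : p ∈ C) : PairCoverable (C.erase p) :=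
    ih _ (erase_ssubset hp) ((card_erase_le).trans hC)
  by_cases hcol : ∃ p ∈ C, ∀ q ∈ C, q ≠ p → q.2 ≠ p.2
  · obtain ⟨p, hp, hcol⟩ := hcol
    exact (ih_erase hp).of_erase_of_forall_snd_ne hcol
  by_cases hrow : ∃ p ∈ C, ∀ q ∈ C, q ≠ p → q.1 ≠ p.1
  · obtain ⟨p, hp, hrow⟩ := hrow
    exact (ih_erase hp).of_erase_of_forall_fst_ne hrow
  push Not at hcol hrow
  -- every row and every column meets `C` at least twice, so `C` lies in a `2 × 2` box
  obtain ⟨a₁, a₂, ha⟩ := exists_subset_pair_of_card_le_two (s := C.image Prod.fst)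
    (by have := two_mul_card_image_le Prod.fst hrow; omega)
  obtain ⟨b₁, b₂, hb⟩ := exists_subset_pair_of_card_le_two (s := C.image Prod.snd)
    (by have := two_mul_card_image_le Prod.snd hcol; omega)
  refine pairCoverable_of_forall_mem_pair (a₁ := a₁) (a₂ := a₂) (b₁ := b₁) (b₂ := b₂)
    fun p hp => ⟨?_, ?_⟩
  · simpa using ha (mem_image_of_mem _ hp)
  · simpa using hb (mem_image_of_mem _ hp)

end PairCoverable

namespace SimpleGraph

variable {V : Type*} {G : SimpleGraph V}

theorem mul_card_guess_eq_le [Fintype V] [DecidableEq V] {q : ℕ}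
    {g : V → (V → Fin q) → Fin q}
    (hg : ∀ (v : V) (h h' : V → Fin q), (∀ u, G.Adj v u → h u = h' u) → g v h = g v h')
    (v : V) : q * #{h : V → Fin q | g v h = h v} ≤ q ^ Fintype.card V := by
  -- a correct guess at `v` is determined by the colours off `v`
  have hinj : Set.InjOn (fun h (w : {w // w ≠ v}) => h w) {h : V → Fin q | g v h = h v} := by
    intro h₁ hh₁ h₂ hh₂ heq
    have hoff : ∀ w ≠ v, h₁ w = h₂ w := fun w hw => congrFun heq ⟨w, hw⟩
    funext w
    by_cases hw : w = v
    · subst hw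
      rw [← hh₁.out, ← hh₂.out]
      exact hg w h₁ h₂ fun u hu => hoff u (G.ne_of_adj hu).symm
    · exact hoff w hw
  have hcard : #{h : V → Fin q | g v h = h v} ≤ Fintype.card ({w // w ≠ v} → Fin q) :=
    card_le_card_of_injOn _ (fun _ _ => mem_univ _) (by simpa using hinj)
  calc q * #{h : V → Fin q | g v h = h v}
      ≤ q * Fintype.card ({w // w ≠ v} → Fin q) := Nat.mul_le_mul_left q hcard
    _ = q ^ Fintype.card V := by
      simpa using (Fintype.card_congr (Equiv.piSplitAt v fun _ => Fin q)).symm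

theorem HatWinning.le_card [Fintype V] {q : ℕ} (hw : G.HatWinning q) : q ≤ Fintype.card V := by
  classical
  obtain ⟨g, hg, hwin⟩ := hw
  have hcover : q ^ Fintype.card V ≤ ∑ v, #{h : V → Fin q | g v h = h v} := by
    calc q ^ Fintype.card V = #(univ : Finset (V → Fin q)) := by simp
      _ ≤ #(univ.biUnion fun v => {h : V → Fin q | g v h = h v}) :=
        card_le_card fun h _ => by simpa using hwin h
      _ ≤ _ := card_biUnion_le
  have hsum : q * q ^ Fintype.card V ≤ Fintype.card V * q ^ Fintype.card V :=
    calc q * q ^ Fintype.card V ≤ ∑ v, q * #{h : V → Fin q | g v h = h v} := by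
          rw [← mul_sum]; exact Nat.mul_le_mul_left q hcover
      _ ≤ ∑ _v : V, q ^ Fintype.card V := sum_le_sum fun v _ => mul_card_guess_eq_le hg v
      _ = Fintype.card V * q ^ Fintype.card V := by simp
  rcases q.eq_zero_or_pos with rfl | hq
  · exact Nat.zero_le _
  · exact Nat.le_of_mul_le_mul_right hsum (pow_pos hq _)

theorem HatWinning.le_hatGuessingNumber [Finite V] {q : ℕ} (hw : G.HatWinning q) :
    q ≤ G.hatGuessingNumber := by
  have := Fintype.ofFinite V
  exact le_csSup ⟨Fintype.card V, fun _ => HatWinning.le_card⟩ hw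

end SimpleGraph

theorem Function.Surjective.exists_apply_eq_of_card_le {ι X R : Type*} [Fintype R]
    [Nonempty R] {ψ : ι → X → R} (hψ : Surjective ψ) (s : ι → R) {S : Finset X}
    (hS : Fintype.card R ≤ #S) :
    ∃ i, ∃ x ∈ S, ψ i x = s i := by
  obtain ⟨e⟩ := Embedding.nonempty_of_card_le (α := R) (β := S) (by simpa using hS)
  have he : Injective fun r => (e r : X) := Subtype.val_injective.comp e.injective
  obtain ⟨i, hi⟩ := hψ (invFun fun r => (e r : X))
  exact ⟨i, e (s i), (e (s i)).2, by rw [hi]; exact leftInverse_invFun he (s i)⟩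

theorem Fin.exists_surjective_of_card_le {α : Type*} [Fintype α] [Nonempty α] {m : ℕ}
    (h : Fintype.card α ≤ m) : ∃ f : Fin m → α, Surjective f := by
  obtain ⟨e⟩ := Embedding.nonempty_of_card_le (α := α) (β := Fin m) (by simpa using h)
  exact ⟨invFun e, invFun_surjective e.injective⟩

namespace pairGraph

variable {m q : ℕ}

def centre (h : Bool ⊕ (Fin m × Bool) → Fin q) : Fin q × Fin q :=
  (h (.inl false), h (.inl true))

def outerSum (h : Bool ⊕ (Fin m × Bool) → Fin q) (i : Fin m) : Fin q :=
  h (.inr (i, false)) + h (.inr (i, true))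

variable {R : Type*} [DecidableEq R] (e : R × Bool ≃ Fin q)
  (ψ : Fin m → Fin q × Fin q → R)

def survivors (h : Bool ⊕ (Fin m × Bool) → Fin q) : Finset (Fin q × Fin q) :=
  {c | ∀ i, ψ i c ≠ (e.symm (outerSum h i)).1}

def strategy (G F : Finset (Fin q × Fin q) → Fin q → Fin q) :
    Bool ⊕ (Fin m × Bool) → (Bool ⊕ (Fin m × Bool) → Fin q) → Fin q
  | .inl false, h => G (survivors e ψ h) (h (.inl true))
  | .inl true, h => F (survivors e ψ h) (h (.inl false))
  | .inr (i, b), h => e (ψ i (centre h), b) - h (.inr (i, !b))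

variable {e ψ} {G F : Finset (Fin q × Fin q) → Fin q → Fin q}

theorem survivors_eq_of_adj {h h' : Bool ⊕ (Fin m × Bool) → Fin q} {b : Bool}
    (hh' : ∀ u, (pairGraph m).Adj (.inl b) u → h u = h' u) :
    survivors e ψ h = survivors e ψ h' := by
  refine filter_congr fun c _ => ?_
  simp only [outerSum, hh' (.inr _) trivial]

theorem strategy_local (v : Bool ⊕ (Fin m × Bool)) (h h' : Bool ⊕ (Fin m × Bool) → Fin q)
    (hh' : ∀ u, (pairGraph m).Adj v u → h u = h' u) :
    strategy e ψ G F v h = strategy e ψ G F v h' := by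
  rcases v with (_ | _) | ⟨i, b⟩
  · simp only [strategy, survivors_eq_of_adj hh', hh' (.inl true) Bool.false_ne_true]
  · simp only [strategy, survivors_eq_of_adj hh', hh' (.inl false) Bool.false_ne_true.symm]
  · have hmate : (pairGraph m).Adj (.inr (i, b)) (.inr (i, !b)) := ⟨rfl, by cases b <;> simp⟩
    simp only [strategy, centre, hh' (.inl _) trivial, hh' _ hmate]

theorem strategy_outer_eq_iff [NeZero q] (h : Bool ⊕ (Fin m × Bool) → Fin q) (i : Fin m)
    (b : Bool) :
    strategy e ψ G F (.inr (i, b)) h = h (.inr (i, b)) ↔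
      outerSum h i = e (ψ i (centre h), b) := by
  rw [eq_comm]
  cases b
  · exact eq_sub_iff_add_eq
  · rw [outerSum, add_comm]
    exact eq_sub_iff_add_eq

theorem centre_mem_survivors [NeZero q] {h : Bool ⊕ (Fin m × Bool) → Fin q}
    (hlose : ∀ i b, strategy e ψ G F (.inr (i, b)) h ≠ h (.inr (i, b))) :
    centre h ∈ survivors e ψ h := by
  simp only [survivors, mem_filter, mem_univ, true_and]
  intro i hi
  apply hlose i (e.symm (outerSum h i)).2
  rw [strategy_outer_eq_iff, hi, Prod.mk.eta, e.apply_symm_apply]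

theorem card_survivors_lt [Fintype R] [Nonempty R] (hψ : Surjective ψ)
    (h : Bool ⊕ (Fin m × Bool) → Fin q) :
    #(survivors e ψ h) < Fintype.card R := by
  by_contra! hcard
  obtain ⟨i, c, hc, hci⟩ := hψ.exists_apply_eq_of_card_le _ hcard
  exact (mem_filter.1 hc).2 i hci

theorem strategy_wins [NeZero q] [Fintype R] [Nonempty R] (hψ : Surjective ψ)
    (hGF : ∀ C, #C < Fintype.card R → ∀ p ∈ C, p.1 = G C p.2 ∨ p.2 = F C p.1)
    (h : Bool ⊕ (Fin m × Bool) → Fin q) : ∃ v, strategy e ψ G F v h = h v := by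
  by_contra! hlose
  rcases hGF _ (card_survivors_lt hψ h) _ (centre_mem_survivors fun i b => hlose _) with hu | hv
  · exact hlose (.inl false) hu.symm
  · exact hlose (.inl true) hv.symm

end pairGraph

theorem pairGraph_hatWinning_of_pairCoverable {m q : ℕ} [NeZero q] {R : Type*} [Fintype R]
    [Nonempty R] (e : R × Bool ≃ Fin q) (hm : Fintype.card R ^ (q * q) ≤ m)
    (hcover : ∀ C : Finset (Fin q × Fin q), #C < Fintype.card R → PairCoverable C) :
    (pairGraph m).HatWinning q := by
  classical
  obtain ⟨ψ, hψ⟩ := Fin.exists_surjective_of_card_le (α := Fin q × Fin q → R) (by simpa using hm)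
  choose! G F hGF using hcover
  exact ⟨pairGraph.strategy e ψ G F, pairGraph.strategy_local, pairGraph.strategy_wins hψ hGF⟩

/-- For `m = 66 ^ 144`, the graph consisting of a central adjacent pair and
`m` outer adjacent pairs (each outer vertex adjacent to both central vertices) admits a winning
guessing strategy with 12 colors; in particular its hat guessing number is at least 12. -/
theorem pairGraph_hatWinning_twelve :
    (pairGraph (66 ^ 144)).HatWinning 12 ∧
      12 ≤ (pairGraph (66 ^ 144)).hatGuessingNumber := by
  have hw : (pairGraph (66 ^ 144)).HatWinning 12 :=
    pairGraph_hatWinning_of_pairCoverable (R := Fin 6) (Fintype.equivFinOfCardEq (by simp))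
      (by norm_num) fun C hC => pairCoverable_of_card_le_five (by simp at hC; omega)
  exact ⟨hw, hw.le_hatGuessingNumber⟩
end

section
/- Let m ≥ 1 and let G be the graph whose vertex set consists of two adjacent vertices u, v (the central pair) together with m pairs of adjacent vertices x_i, y_i (the outer pairs), where each x_i and each y_i is adjacent to both u and v, and there are no other edges. Then with 13 colors there is no winning guessing strategy on G; in particular HG(G) ≤ 12. -/
/-!
Give `u` two and `v` three admissible colors: six central configurations. The outer pair
`xᵢ, yᵢ` sees only the central pair and each other, and since `13 > 2 · 6` some colors
`(cᵢ, dᵢ)` fool both `xᵢ` and `yᵢ` under all six configurations (by averaging, some `cᵢ` is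
guessed by `xᵢ` for at most six of its views). The central pair is then left with the
two-player game on a `2 × 3` grid of colors, in which `u` is right in at most three cells and
`v` in at most two.
-/

namespace SimpleGraph

variable {V α : Type*}

def IsLocalStrategy (G : SimpleGraph V) (g : V → (V → α) → α) : Prop :=
  ∀ (v : V) (h h' : V → α), (∀ u, G.Adj v u → h u = h' u) → g v h = g v h'

end SimpleGraph

open Finset

theorem exists_ne_ne_of_card_add_lt_card_mul {α β : Type*} [DecidableEq α] [DecidableEq β]
    {A : Finset α} {B : Finset β} (hAB : #A + #B < #A * #B) (gu : β → α) (gv : α → β) :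
    ∃ a ∈ A, ∃ b ∈ B, gu b ≠ a ∧ gv a ≠ b := by
  set covered := B.image (fun b => (gu b, b)) ∪ A.image (fun a => (a, gv a))
  have hcovered : #covered < #(A ×ˢ B) := calc
    #covered ≤ #B + #A := (card_union_le _ _).trans (add_le_add card_image_le card_image_le)
    _ < #(A ×ˢ B) := by rw [card_product]; omega
  obtain ⟨⟨a, b⟩, hab, hnot⟩ := exists_mem_notMem_of_card_lt_card hcovered
  rw [mem_product] at hab
  refine ⟨a, hab.1, b, hab.2, ?_, ?_⟩ <;> rintro rfl <;> apply hnot <;> simp [covered, hab]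

theorem exists_pair_forall_ne {ι α : Type*} [Fintype α] [DecidableEq α] (s : Finset ι)
    (hs : 2 * #s < Fintype.card α) (P Q : ι → α → α) :
    ∃ c d : α, ∀ k ∈ s, P k d ≠ c ∧ Q k c ≠ d := by
  classical
  have : Nonempty α := Fintype.card_pos_iff.mp (by omega)
  obtain ⟨c, -, hc⟩ := exists_card_fiber_le_of_card_le_mul (s := s ×ˢ (univ : Finset α))
    (f := fun p => P p.1 p.2) (n := #s) univ_nonempty
    (by rw [card_product, card_univ, mul_comm])
  set bad := {p ∈ s ×ˢ (univ : Finset α) | P p.1 p.2 = c}.image Prod.snd ∪ s.image (Q · c)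
  have hbad : #bad < #(univ : Finset α) := calc
    #bad ≤ #s + #s :=
      (card_union_le _ _).trans (add_le_add (card_image_le.trans hc) card_image_le)
    _ < #(univ : Finset α) := by rw [card_univ]; omega
  obtain ⟨d, -, hd⟩ := exists_mem_notMem_of_card_lt_card hbad
  refine ⟨c, d, fun k hk =>
    ⟨fun hP => hd (mem_union_left _ ?_), fun hQ => hd (mem_union_right _ ?_)⟩⟩
  · exact mem_image.mpr ⟨(k, d), by simp [hk, hP], rfl⟩
  · exact mem_image.mpr ⟨k, hk, hQ⟩

namespace pairGraph

variable {m : ℕ} {α : Type*}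

def hatAssignment (a b : α) (x y : Fin m → α) : Bool ⊕ (Fin m × Bool) → α
  | .inl false => a
  | .inl true => b
  | .inr (i, false) => x i
  | .inr (i, true) => y i

variable {g : Bool ⊕ (Fin m × Bool) → (Bool ⊕ (Fin m × Bool) → α) → α}
  (hg : (pairGraph m).IsLocalStrategy g) (a a' b b' : α) (x x' y y' : Fin m → α)
include hg

theorem guess_inl_false_eq :
    g (.inl false) (hatAssignment a b x y) = g (.inl false) (hatAssignment a' b x y) :=
  hg _ _ _ fun w hw => by
    rcases w with (_ | _) | ⟨j, _ | _⟩ <;> simp_all [pairGraph, hatAssignment]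

theorem guess_inl_true_eq :
    g (.inl true) (hatAssignment a b x y) = g (.inl true) (hatAssignment a b' x y) :=
  hg _ _ _ fun w hw => by
    rcases w with (_ | _) | ⟨j, _ | _⟩ <;> simp_all [pairGraph, hatAssignment]

theorem guess_inr_false_eq {i : Fin m} (hy : y i = y' i) :
    g (.inr (i, false)) (hatAssignment a b x y) = g (.inr (i, false)) (hatAssignment a b x' y') :=
  hg _ _ _ fun w hw => by
    rcases w with (_ | _) | ⟨j, _ | _⟩ <;> simp_all [pairGraph, hatAssignment]

theorem guess_inr_true_eq {i : Fin m} (hx : x i = x' i) :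
    g (.inr (i, true)) (hatAssignment a b x y) = g (.inr (i, true)) (hatAssignment a b x' y') :=
  hg _ _ _ fun w hw => by
    rcases w with (_ | _) | ⟨j, _ | _⟩ <;> simp_all [pairGraph, hatAssignment]

end pairGraph

open pairGraph in
theorem pairGraph_not_hatWinning {m q : ℕ} (hq : 13 ≤ q) : ¬ (pairGraph m).HatWinning q := by
  rintro ⟨g, hg, hwin⟩
  obtain ⟨A, -, hA⟩ :=
    exists_subset_card_eq (s := (univ : Finset (Fin q))) (n := 2) (by simp; omega)
  obtain ⟨B, -, hB⟩ :=
    exists_subset_card_eq (s := (univ : Finset (Fin q))) (n := 3) (by simp; omega)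
  -- `xᵢ` ignores the `x`-argument of `hatAssignment`, `yᵢ` the `y`-argument
  have hfool (i : Fin m) : ∃ c d : Fin q, ∀ k ∈ A ×ˢ B,
      g (.inr (i, false)) (hatAssignment k.1 k.2 (fun _ => d) (fun _ => d)) ≠ c ∧
      g (.inr (i, true)) (hatAssignment k.1 k.2 (fun _ => c) (fun _ => c)) ≠ d :=
    exists_pair_forall_ne _ (by simp [card_product, hA, hB]; omega) _ _
  choose x y hxy using hfool
  obtain ⟨a, ha, b, hb, hu, hv⟩ := exists_ne_ne_of_card_add_lt_card_mul (A := A) (B := B)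
    (by rw [hA, hB]; norm_num) (fun b => g (.inl false) (hatAssignment b b x y))
    (fun a => g (.inl true) (hatAssignment a a x y))
  have hab : (a, b) ∈ A ×ˢ B := mem_product.2 ⟨ha, hb⟩
  obtain ⟨w, hw⟩ := hwin (hatAssignment a b x y)
  rcases w with (_ | _) | ⟨i, _ | _⟩
  · exact hu ((guess_inl_false_eq hg _ _ _ _ _).trans hw)
  · exact hv ((guess_inl_true_eq hg _ _ _ _ _).trans hw)
  · exact (hxy i _ hab).1
      ((guess_inr_false_eq hg a b (fun _ => y i) x (fun _ => y i) y rfl).trans hw)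
  · exact (hxy i _ hab).2
      ((guess_inr_true_eq hg a b (fun _ => x i) x (fun _ => x i) y rfl).trans hw)

theorem pairGraph_not_hatWinning_thirteen_general (m : ℕ) :
    ¬ (pairGraph m).HatWinning 13 ∧ (pairGraph m).hatGuessingNumber ≤ 12 :=
  ⟨pairGraph_not_hatWinning le_rfl, csSup_le' fun _ hq =>
    not_lt.1 fun h => pairGraph_not_hatWinning h hq⟩

/-- For every `m ≥ 1`, the graph consisting of a central adjacent pair and
`m` outer adjacent pairs (each outer vertex adjacent to both central vertices) has no winning
guessing strategy with 13 colors; in particular its hat guessing number is at most 12. -/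
theorem pairGraph_not_hatWinning_thirteen (m : ℕ) (hm : 1 ≤ m) :
    ¬ (pairGraph m).HatWinning 13 ∧ (pairGraph m).hatGuessingNumber ≤ 12 :=
  pairGraph_not_hatWinning_thirteen_general m
end

section
/- For every integer d ≥ 2, setting q = d^{d-2} and m = d^{d+3}, there exist m functions f_1, …, f_m from (ZMod q)^d to ZMod q such that for every subset S of (ZMod q)^d with |S| = d^d, at least one of the functions f_i restricted to S is surjective onto ZMod q. -/
/-!
A counting form of the probabilistic method. With `N = q ^ d` points, a map to `ZMod q` misses
some value on a fixed `s`-set `S` for at most `q (q - 1) ^ s q ^ (N - s)` of the `q ^ N` maps, so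
an `m`-tuple of maps fails on `S` for at most the `m`-th power of that. Summing over the
`N.choose s ≤ N ^ s` sets leaves fewer than all `q ^ (N m)` tuples, because Bernoulli's
inequality `2 (q - 1) ^ q ≤ q ^ q` turns the loss `((q - 1) / q) ^ (s m)` into `2 ^ (-(s m) / q)`,
and for `q = d ^ (d - 2)`, `s = d ^ d`, `m = d ^ (d + 3)` (so `s m = q d ^ (d + 5)`) this beats
`N ^ s q ^ m`.
-/

open Finset Fintype

lemma card_filter_forall_apply {ι γ : Type*} [Fintype ι] [DecidableEq ι] [Fintype γ]
    (P : γ → Prop) [DecidablePred P] :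
    #{F : ι → γ | ∀ i, P (F i)} = #{g | P g} ^ card ι := by
  have hpi : ({F : ι → γ | ∀ i, P (F i)} : Finset _) = piFinset fun _ => {g | P g} := by
    ext F; simp
  rw [hpi, card_piFinset, prod_const, card_univ]

section Counting

variable {α β : Type*} [Fintype α] [Fintype β] [DecidableEq α] [DecidableEq β]

lemma card_filter_forall_mem_ne (S : Finset α) (y : β) :
    #{f : α → β | ∀ x ∈ S, f x ≠ y} = (card β - 1) ^ #S * card β ^ (card α - #S) := by
  have hpi : ({f : α → β | ∀ x ∈ S, f x ≠ y} : Finset _) =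
      piFinset fun x => if x ∈ S then {y}ᶜ else univ := by
    ext f
    simp only [mem_filter, mem_univ, true_and, mem_piFinset]
    refine forall_congr' fun x => ?_
    split_ifs with hx <;> simp [hx]
  rw [hpi, card_piFinset, prod_apply_ite]
  simp [card_compl, filter_not, card_univ_sdiff]

lemma card_filter_not_surjOn_le (S : Finset α) :
    #{f : α → β | ∃ y, ∀ x ∈ S, f x ≠ y}
      ≤ card β * ((card β - 1) ^ #S * card β ^ (card α - #S)) := by
  have hcover : ({f : α → β | ∃ y, ∀ x ∈ S, f x ≠ y} : Finset _) =
      univ.biUnion fun y : β => {f : α → β | ∀ x ∈ S, f x ≠ y} := by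
    ext f; simp
  rw [hcover]
  exact card_biUnion_le_card_mul _ _ _ fun y _ => (card_filter_forall_mem_ne S y).le

theorem exists_tuple_surjOn_of_choose_mul_lt (m s : ℕ)
    (h : (card α).choose s * (card β * ((card β - 1) ^ s * card β ^ (card α - s))) ^ m
      < card β ^ (card α * m)) :
    ∃ f : Fin m → α → β, ∀ S : Finset α, #S = s → ∃ i, ∀ y, ∃ x ∈ S, f i x = y := by
  by_contra! hbad
  have hcover : (univ : Finset (Fin m → α → β)) ⊆ (powersetCard s univ).biUnion
      fun S => {F | ∀ i, ∃ y, ∀ x ∈ S, F i x ≠ y} := by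
    intro F _
    obtain ⟨S, hS, hF⟩ := hbad F
    exact mem_biUnion.2
      ⟨S, mem_powersetCard.2 ⟨subset_univ S, hS⟩, mem_filter.2 ⟨mem_univ F, hF⟩⟩
  have hbound := (card_le_card hcover).trans <| card_biUnion_le_card_mul _ _
      ((card β * ((card β - 1) ^ s * card β ^ (card α - s))) ^ m) fun S hS => by
    rw [← (mem_powersetCard.1 hS).2]
    calc #{F : Fin m → α → β | ∀ i, ∃ y, ∀ x ∈ S, F i x ≠ y}
        = #{f : α → β | ∃ y, ∀ x ∈ S, f x ≠ y} ^ m := by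
          simpa using card_filter_forall_apply (ι := Fin m) fun f : α → β => ∃ y, ∀ x ∈ S, f x ≠ y
      _ ≤ _ := Nat.pow_le_pow_left (card_filter_not_surjOn_le S) _
  rw [card_univ, card_fun, card_fun, Fintype.card_fin, ← pow_mul, card_powersetCard,
    card_univ] at hbound
  omega

end Counting

lemma two_mul_pow_le_succ_pow (p : ℕ) : 2 * p ^ (p + 1) ≤ (p + 1) ^ (p + 1) := by
  have bernoulli :=
    pow_add_mul_le_add_pow (a := p) (b := 1) (Nat.zero_le _) (Nat.zero_le _) (p + 1)
  have : p ^ (p + 1) ≤ (p + 1) * p ^ p := by rw [pow_succ, mul_comm]; gcongr; omega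
  simp only [add_tsub_cancel_right, mul_one, Nat.cast_id] at bernoulli
  omega

lemma choose_mul_pow_lt {q N s m K : ℕ} (hq : 2 ≤ q) (hsN : s ≤ N) (hK : s * m = q * K)
    (h : N ^ s * q ^ m < 2 ^ K) :
    N.choose s * (q * ((q - 1) ^ s * q ^ (N - s))) ^ m < q ^ (N * m) := by
  obtain ⟨p, rfl⟩ : ∃ p, q = p + 1 := ⟨q - 1, by omega⟩
  rw [add_tsub_cancel_right]
  have hp : 0 < p ^ (s * m) := pow_pos (by omega) _
  calc N.choose s * ((p + 1) * (p ^ s * (p + 1) ^ (N - s))) ^ m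
      ≤ N ^ s * (p + 1) ^ m * p ^ (s * m) * (p + 1) ^ ((N - s) * m) := by
        rw [mul_pow, mul_pow, ← pow_mul, ← pow_mul, ← mul_assoc, ← mul_assoc]
        gcongr
        exact Nat.choose_le_pow N s
    _ < 2 ^ K * p ^ (s * m) * (p + 1) ^ ((N - s) * m) := by gcongr
    _ = (2 * p ^ (p + 1)) ^ K * (p + 1) ^ ((N - s) * m) := by rw [hK, pow_mul, mul_pow]
    _ ≤ ((p + 1) ^ (p + 1)) ^ K * (p + 1) ^ ((N - s) * m) := by
        gcongr; exact two_mul_pow_le_succ_pow p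
    _ = (p + 1) ^ (N * m) := by
        rw [← pow_mul, ← hK, ← pow_add, ← add_mul, Nat.add_sub_cancel' hsN]

lemma pow_pow_mul_pow_lt_two_pow {d : ℕ} (hd : 3 ≤ d) :
    ((d ^ (d - 2)) ^ d) ^ d ^ d * (d ^ (d - 2)) ^ d ^ (d + 3) < 2 ^ d ^ (d + 5) := by
  obtain ⟨k, rfl⟩ : ∃ k, d = k + 3 := ⟨d - 3, by omega⟩
  rw [show k + 3 - 2 = k + 1 by omega]
  set X := (k + 3) ^ (k + 4)
  have hX : 0 < X := by positivity
  have hexp : (k + 2) * (k + 1) * ((k + 3) * (k + 3) ^ (k + 3) + (k + 3) ^ (k + 3 + 3))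
      < (k + 3) ^ (k + 3 + 5) := by
    have h1 : (k + 3) * (k + 3) ^ (k + 3) = X := by rw [← pow_succ']
    have h2 : (k + 3) ^ (k + 3 + 3) = X * (k + 3) ^ 2 := by rw [← pow_add]
    have h3 : (k + 3) ^ (k + 3 + 5) = X * (k + 3) ^ 4 := by rw [← pow_add]
    have hpoly : (k + 2) * (k + 1) * (1 + (k + 3) ^ 2) < (k + 3) ^ 4 := by nlinarith
    rw [h1, h2, h3]
    calc (k + 2) * (k + 1) * (X + X * (k + 3) ^ 2)
          = (k + 2) * (k + 1) * (1 + (k + 3) ^ 2) * X := by ring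
      _ < (k + 3) ^ 4 * X := Nat.mul_lt_mul_of_pos_right hpoly hX
      _ = X * (k + 3) ^ 4 := mul_comm _ _
  have hbase : k + 3 ≤ 2 ^ (k + 2) := Nat.lt_two_pow_self
  calc (((k + 3) ^ (k + 1)) ^ (k + 3)) ^ (k + 3) ^ (k + 3)
          * ((k + 3) ^ (k + 1)) ^ (k + 3) ^ (k + 3 + 3)
      = (k + 3) ^ ((k + 1) * ((k + 3) * (k + 3) ^ (k + 3) + (k + 3) ^ (k + 3 + 3))) := by
        rw [← pow_mul, ← pow_mul, ← pow_mul, ← pow_add]; ring_nf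
    _ ≤ (2 ^ (k + 2)) ^ ((k + 1) * ((k + 3) * (k + 3) ^ (k + 3) + (k + 3) ^ (k + 3 + 3))) :=
        Nat.pow_le_pow_left hbase _
    _ < 2 ^ (k + 3) ^ (k + 3 + 5) := by
        rw [← pow_mul, ← mul_assoc]
        exact Nat.pow_lt_pow_right one_lt_two hexp

lemma guessing_count_lt {d : ℕ} (hd : 2 ≤ d) :
    ((d ^ (d - 2)) ^ d).choose (d ^ d) * (d ^ (d - 2) * ((d ^ (d - 2) - 1) ^ d ^ d *
      (d ^ (d - 2)) ^ ((d ^ (d - 2)) ^ d - d ^ d))) ^ d ^ (d + 3)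
      < (d ^ (d - 2)) ^ ((d ^ (d - 2)) ^ d * d ^ (d + 3)) := by
  obtain rfl | hd3 : d = 2 ∨ 3 ≤ d := by omega
  · norm_num -- `q = 1`, so no set of size `4` exists
  have hdq : d ≤ d ^ (d - 2) := Nat.le_self_pow (by omega) d
  refine choose_mul_pow_lt (by omega) (Nat.pow_le_pow_left hdq d) ?_
    (pow_pow_mul_pow_lt_two_pow hd3)
  rw [← pow_add, ← pow_add]
  congr 1
  omega

/-- For every integer `d ≥ 2`, with `q = d ^ (d - 2)` and `m = d ^ (d + 3)`,
there exist `m` functions from `(ZMod q)^d` to `ZMod q` such that for every subset `S` of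
`(ZMod q)^d` of size `d ^ d`, at least one of the functions restricted to `S` is surjective
onto `ZMod q`. -/
theorem exists_onto_guessing_functions (d : ℕ) (hd : 2 ≤ d) :
    ∃ f : Fin (d ^ (d + 3)) → (Fin d → ZMod (d ^ (d - 2))) → ZMod (d ^ (d - 2)),
      ∀ S : Finset (Fin d → ZMod (d ^ (d - 2))), S.card = d ^ d →
        ∃ i, ∀ y : ZMod (d ^ (d - 2)), ∃ x ∈ S, f i x = y := by
  have : NeZero (d ^ (d - 2)) := ⟨by positivity⟩
  apply exists_tuple_surjOn_of_choose_mul_lt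
  simpa only [card_fun, ZMod.card, Fintype.card_fin] using guessing_count_lt hd
end

section
/- Let F be a finite field with p elements, let n, m be positive integers, and for each 1 ≤ i ≤ n, 1 ≤ k ≤ m let f_{ik} : F^{[n]×[m]} → F be a linear map depending only on the coordinates x_{jl} with l ≠ k, and let b_{ik} ∈ F. For x ∈ F^{[n]×[m]} define F(x) = { (i, k, x_{ik} − f_{ik}(x) − b_{ik}) : 1 ≤ i ≤ n, 1 ≤ k ≤ m } ⊆ [n]×[m]×F. Then for every nonempty subset Z of [n]×[m]×F, the number of vectors x ∈ F^{[n]×[m]} with Z ⊆ F(x) is at most p^{nm − |Z|/m}. -/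
/-- Let `F` be a finite field with `p` elements and, for each vertex `(i, k)`
of `K_n^{(m)}`, let `x ↦ f (i, k) x + b (i, k)` be an affine guessing function, where the
linear map `f (i, k)` depends only on the coordinates `x (j, l)` with `l ≠ k`. For a hat
assignment `x`, let `F(x) = {(i, k, x (i,k) - f (i,k) x - b (i,k))}`. Then for every nonempty
`Z ⊆ [n]×[m]×F`, the number of `x` with `Z ⊆ F(x)` is at most `p ^ (n*m - |Z|/m)`; that is,
the family `{F(x)}` is `p^(1/m)`-spread. -/
theorem spread_family_linear_guessing
    (F : Type) [Field F] [Fintype F] (n m : ℕ) (hn : 0 < n) (hm : 0 < m)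
    (f : Fin n × Fin m → (Fin n × Fin m → F) →ₗ[F] F) (b : Fin n × Fin m → F)
    (hdep : ∀ (i : Fin n) (k : Fin m) (x y : Fin n × Fin m → F),
        (∀ (j : Fin n) (l : Fin m), l ≠ k → x (j, l) = y (j, l)) → f (i, k) x = f (i, k) y)
    (Z : Finset ((Fin n × Fin m) × F)) (hZ : Z.Nonempty) :
    (Nat.card {x : Fin n × Fin m → F //
        ∀ z ∈ Z, z.2 = x z.1 - f z.1 x - b z.1} : ℝ) ≤
      (Fintype.card F : ℝ) ^ ((n * m : ℝ) - (Z.card : ℝ) / (m : ℝ)) := by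
  classical
  have hp : 1 < Fintype.card F := Fintype.one_lt_card
  have hp1 : (1 : ℝ) ≤ (Fintype.card F : ℝ) := by exact_mod_cast hp.le
  by_cases hconf : ∀ z ∈ Z, ∀ z' ∈ Z, z.1 = z'.1 → z.2 = z'.2
  · -- consistent case
    set V : Finset (Fin n × Fin m) := Z.image Prod.fst with hV
    have hVcard : V.card = Z.card := by
      apply Finset.card_image_of_injOn
      intro z hz z' hz' h
      exact Prod.ext h (hconf z hz z' hz' h)
    obtain ⟨k, -, hk⟩ := Finset.exists_max_image (Finset.univ : Finset (Fin m))
      (fun k => (V.filter (fun v => v.2 = k)).card) ⟨⟨0, hm⟩, Finset.mem_univ _⟩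
    set S : Finset (Fin n × Fin m) := V.filter (fun v => v.2 = k) with hS
    have hZle : Z.card ≤ m * S.card := by
      rw [← hVcard]
      have hfib : V.card = ∑ k' : Fin m, (V.filter (fun v => v.2 = k')).card :=
        Finset.card_eq_sum_card_fiberwise (fun v _ => Finset.mem_univ v.2)
      rw [hfib]
      calc ∑ k' : Fin m, (V.filter (fun v => v.2 = k')).card
          ≤ (Finset.univ : Finset (Fin m)).card • S.card :=
            Finset.sum_le_card_nsmul _ _ _ (fun k' _ => hk k' (Finset.mem_univ k'))
        _ = m * S.card := by
            rw [Finset.card_univ, Fintype.card_fin, smul_eq_mul]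
    have hSnm : S.card ≤ n * m := by
      calc S.card ≤ Fintype.card (Fin n × Fin m) := Finset.card_le_univ S
        _ = n * m := by simp
    -- injectivity of restriction to coordinates outside S
    have hinj : Function.Injective
        (fun x : {x : Fin n × Fin m → F // ∀ z ∈ Z, z.2 = x z.1 - f z.1 x - b z.1} =>
          (fun u : {u : Fin n × Fin m // u ∉ S} => x.1 u.1)) := by
      intro x y hxy
      have hoff : ∀ u ∉ S, x.1 u = y.1 u := fun u hu => congrFun hxy ⟨u, hu⟩
      apply Subtype.ext
      funext u
      by_cases hu : u ∈ S
      · have huk : u.2 = k := (Finset.mem_filter.mp hu).2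
        have huV : u ∈ V := (Finset.mem_filter.mp hu).1
        obtain ⟨z, hz, hz1⟩ := Finset.mem_image.mp huV
        have hf : f u x.1 = f u y.1 := by
          have := hdep u.1 u.2 x.1 y.1 (by
            intro j l hl
            apply hoff
            simp only [hS, Finset.mem_filter]
            rintro ⟨-, h2⟩
            exact hl (h2.trans huk.symm))
          simpa using this
        have hx := x.2 z hz
        have hy := y.2 z hz
        rw [hz1] at hx hy
        have : x.1 u - f u x.1 - b u = y.1 u - f u y.1 - b u := hx ▸ hy ▸ rfl
        rw [hf] at this
        have := sub_left_injective (sub_left_injective this)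
        exact this
      · exact hoff u hu
    have hcard : Nat.card {x : Fin n × Fin m → F //
          ∀ z ∈ Z, z.2 = x z.1 - f z.1 x - b z.1}
        ≤ Fintype.card F ^ (n * m - S.card) := by
      calc Nat.card {x : Fin n × Fin m → F // ∀ z ∈ Z, z.2 = x z.1 - f z.1 x - b z.1}
          ≤ Nat.card ({u : Fin n × Fin m // u ∉ S} → F) :=
            Nat.card_le_card_of_injective _ hinj
        _ = Fintype.card F ^ (Fintype.card {u : Fin n × Fin m // u ∉ S}) := by
            simp [Nat.card_eq_fintype_card, Fintype.card_fun]
        _ = Fintype.card F ^ (n * m - S.card) := by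
            congr 1
            rw [Fintype.card_subtype_compl]
            simp
    calc (Nat.card {x : Fin n × Fin m → F //
            ∀ z ∈ Z, z.2 = x z.1 - f z.1 x - b z.1} : ℝ)
        ≤ ((Fintype.card F ^ (n * m - S.card) : ℕ) : ℝ) := by exact_mod_cast hcard
      _ = (Fintype.card F : ℝ) ^ (((n * m - S.card : ℕ) : ℝ)) := by
          rw [Real.rpow_natCast]; push_cast; ring
      _ ≤ (Fintype.card F : ℝ) ^ ((n * m : ℝ) - (Z.card : ℝ) / (m : ℝ)) := by
          apply Real.rpow_le_rpow_of_exponent_le hp1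
          rw [Nat.cast_sub hSnm]
          push_cast
          have hmpos : (0 : ℝ) < (m : ℝ) := by exact_mod_cast hm
          rw [sub_le_sub_iff_left, div_le_iff₀ hmpos]
          calc (Z.card : ℝ) ≤ (m * S.card : ℕ) := by exact_mod_cast hZle
            _ = (S.card : ℝ) * m := by push_cast; ring
  · -- inconsistent case: no solutions
    push_neg at hconf
    obtain ⟨z, hz, z', hz', h1, h2⟩ := hconf
    have hempty : IsEmpty {x : Fin n × Fin m → F //
        ∀ z ∈ Z, z.2 = x z.1 - f z.1 x - b z.1} := by
      constructor
      rintro ⟨x, hx⟩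
      apply h2
      rw [hx z hz, hx z' hz', h1]
    rw [Nat.card_of_isEmpty, Nat.cast_zero]
    positivity
end

section
/- Let Q = ZMod 13 and let S ⊆ Q × Q with |S| ≤ 6. For any two functions g_x, g_y : Q × Q × Q → Q (interpreted as the guesses of the two vertices of an outer pair, as a function of the colors of u, v and of the partner vertex), there exist at least 13 pairs (a, b) ∈ Q × Q such that for every (c, d) ∈ S one has g_x(c, d, b) ≠ a and g_y(c, d, a) ≠ b. In particular, there is a coloring (a, b) of the outer pair such that both of its vertices guess incorrectly under all 6 colorings (c,d) of the central pair. -/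
/-- With 13 colors (`ZMod 13`), for any set `S` of at most 6 colorings of the
central pair `(u, v)` and any guessing functions `gx, gy` of the two vertices of an outer pair
(each a function of the colors of `u`, `v` and of the partner vertex), there are at least 13
colorings `(a, b)` of the outer pair such that for every `(c, d) ∈ S` both vertices guess
incorrectly: `gx (c, d, b) ≠ a` and `gy (c, d, a) ≠ b`. -/
theorem outer_pair_bad_colorings_thirteen
    (S : Finset (ZMod 13 × ZMod 13)) (hS : S.card ≤ 6)
    (gx gy : ZMod 13 × ZMod 13 × ZMod 13 → ZMod 13) :
    13 ≤ Nat.card {p : ZMod 13 × ZMod 13 //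
      ∀ cd ∈ S, gx (cd.1, cd.2, p.2) ≠ p.1 ∧ gy (cd.1, cd.2, p.1) ≠ p.2} := by
  classical
  set P : ZMod 13 × ZMod 13 → Prop := fun p =>
    ∀ cd ∈ S, gx (cd.1, cd.2, p.2) ≠ p.1 ∧ gy (cd.1, cd.2, p.1) ≠ p.2 with hP
  have hcard : Nat.card {p : ZMod 13 × ZMod 13 // P p}
      = (Finset.univ.filter P).card := by
    rw [Nat.card_eq_fintype_card, Fintype.card_subtype]
  rw [hcard]
  set Bad : Finset (ZMod 13 × ZMod 13) :=
    S.biUnion (fun cd =>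
      (Finset.univ.image fun b : ZMod 13 => (gx (cd.1, cd.2, b), b)) ∪
      (Finset.univ.image fun a : ZMod 13 => (a, gy (cd.1, cd.2, a)))) with hBad
  have hsub : Finset.univ.filter (fun p => ¬ P p) ⊆ Bad := by
    intro p hp
    simp only [Finset.mem_filter, Finset.mem_univ, true_and, hP] at hp
    push_neg at hp
    obtain ⟨cd, hcd, h⟩ := hp
    simp only [hBad, Finset.mem_biUnion, Finset.mem_union, Finset.mem_image,
      Finset.mem_univ, true_and]
    refine ⟨cd, hcd, ?_⟩
    by_cases hx : gx (cd.1, cd.2, p.2) = p.1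
    · exact Or.inl ⟨p.2, by rw [hx]⟩
    · exact Or.inr ⟨p.1, by rw [h hx]⟩
  have hBadCard : Bad.card ≤ 156 := by
    calc Bad.card ≤ S.sum (fun cd =>
        ((Finset.univ.image fun b : ZMod 13 => (gx (cd.1, cd.2, b), b)) ∪
         (Finset.univ.image fun a : ZMod 13 => (a, gy (cd.1, cd.2, a)))).card) :=
          Finset.card_biUnion_le
      _ ≤ S.sum (fun _ => 26) := by
          refine Finset.sum_le_sum fun cd _ => ?_
          refine le_trans (Finset.card_union_le _ _) ?_
          have h1 := Finset.card_image_le (s := (Finset.univ : Finset (ZMod 13)))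
            (f := fun b : ZMod 13 => (gx (cd.1, cd.2, b), b))
          have h2 := Finset.card_image_le (s := (Finset.univ : Finset (ZMod 13)))
            (f := fun a : ZMod 13 => (a, gy (cd.1, cd.2, a)))
          simp only [Finset.card_univ, ZMod.card] at h1 h2
          omega
      _ = S.card * 26 := by rw [Finset.sum_const, smul_eq_mul]
      _ ≤ 156 := by omega
  have hcompl : (Finset.univ.filter (fun p => ¬ P p)).card ≤ 156 :=
    le_trans (Finset.card_le_card hsub) hBadCard
  have htotal : (Finset.univ.filter P).card
      + (Finset.univ.filter (fun p => ¬ P p)).card = 169 := by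
    rw [Finset.card_filter_add_card_filter_not]
    simp
  omega
end

section
/- Let P denote the set of 2-element subsets of ZMod 12, and let 𝓕 be the set of all functions from (ZMod 12) × (ZMod 12) to P. For every function s : 𝓕 → ZMod 12, the set { (a, b) ∈ (ZMod 12) × (ZMod 12) : for all f ∈ 𝓕, s(f) ∉ f(a, b) } has at most 5 elements. -/
/-- Let `𝓕` be the set of all functions from `(ZMod 12) × (ZMod 12)` to
2-element subsets of `ZMod 12`. For every assignment `s : 𝓕 → ZMod 12` (of a sum of outer-pair
hat colors to each function), the set of pairs `(a, b)` such that `s f ∉ f (a, b)` for all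
`f ∈ 𝓕` has at most 5 elements. -/
theorem central_pair_at_most_five_bad_colorings
    (s : ((ZMod 12 × ZMod 12) → {t : Finset (ZMod 12) // t.card = 2}) → ZMod 12) :
    Nat.card {ab : ZMod 12 × ZMod 12 //
      ∀ f : (ZMod 12 × ZMod 12) → {t : Finset (ZMod 12) // t.card = 2},
        s f ∉ (f ab).1} ≤ 5 := by
  classical
  by_contra h
  push_neg at h
  set B := {ab : ZMod 12 × ZMod 12 //
      ∀ f : (ZMod 12 × ZMod 12) → {t : Finset (ZMod 12) // t.card = 2},
        s f ∉ (f ab).1} with hB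
  have hFin : Fintype B := Fintype.ofFinite _
  have hcard : 6 ≤ Fintype.card B := by
    rw [Nat.card_eq_fintype_card] at h; omega
  obtain ⟨e⟩ := Function.Embedding.nonempty_of_card_le (α := Fin 6) (β := B)
      (by simpa using hcard)
  let p : Fin 6 → {t : Finset (ZMod 12) // t.card = 2} :=
    fun i => ⟨{(2 * (i : ℕ) : ZMod 12), (2 * (i : ℕ) + 1 : ZMod 12)},
      Finset.card_pair (by simp only [ne_eq, left_eq_add]; decide)⟩
  let f : (ZMod 12 × ZMod 12) → {t : Finset (ZMod 12) // t.card = 2} :=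
    fun ab => if h : ∃ i : Fin 6, (e i).1 = ab then p h.choose else p 0
  have hcover : ∀ x : ZMod 12, ∃ i : Fin 6,
      x = (2 * (i : ℕ) : ZMod 12) ∨ x = (2 * (i : ℕ) + 1 : ZMod 12) := by decide
  obtain ⟨i, hi⟩ := hcover (s f)
  have hmem : s f ∈ (p i).1 := by
    simp only [p, Finset.mem_insert, Finset.mem_singleton]
    exact hi
  have hbad := (e i).2 f
  have hex : ∃ j : Fin 6, (e j).1 = (e i).1 := ⟨i, rfl⟩
  have hj : hex.choose = i := by
    have := hex.choose_spec
    exact e.injective (Subtype.ext this)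
  have hfe : f (e i).1 = p i := by
    simp only [f, dif_pos hex, hj]
  rw [hfe] at hbad
  exact hbad hmem
end
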